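/- In A_q(2,3) the identity q²·Tr_q(YZX) − q^{-2}·Tr_q(XYZ) = (q − q^{-1})·Tr_q(X)·Tr_q(YZ) holds. -/
import Mathlib


noncomputable section
open scoped BigOperators

namespace QTR

/-- The free algebra on `m` families of 2×2 generators; `(k, i, j)` stands for the generator
`x(k+1)` with row index `i+1` and column index `j+1` (so e.g. `(k,0,1)` is `x(k+1)12`). -/
abbrev F (m : ℕ) := FreeAlgebra ℂ (Fin m × Fin 2 × Fin 2)

/-- The generator `x(k)_{i+1,j+1}` of the free algebra. -/
def g {m : ℕ} (k : Fin m) (i j : Fin 2) : F m := FreeAlgebra.ι ℂ (k, i, j)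

/-- The defining relations of `A_q(2,m)`: each family satisfies the reflection equation algebra
relations of `A_q(2)`, and each ordered pair of families `(x, y) = (x(k), x(l))` with `k < l`
satisfies the sixteen cross relations. -/
inductive Rel (q : ℂ) (m : ℕ) : F m → F m → Prop
  | base1 (k : Fin m) : Rel q m (g k 1 1 * g k 0 1) (q ^ 2 • (g k 0 1 * g k 1 1))
  | base2 (k : Fin m) : Rel q m (g k 0 0 * g k 0 1)
      (g k 0 1 * g k 0 0 + (q⁻¹ ^ 2 - 1) • (g k 0 1 * g k 1 1))
  | base3 (k : Fin m) : Rel q m (g k 0 0 * g k 1 1) (g k 1 1 * g k 0 0)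
  | base4 (k : Fin m) : Rel q m (g k 1 0 * g k 0 1)
      (g k 0 1 * g k 1 0 + (q⁻¹ ^ 2 - 1) • (g k 1 1 * (g k 1 1 - g k 0 0)))
  | base5 (k : Fin m) : Rel q m (g k 1 0 * g k 1 1) (q ^ 2 • (g k 1 1 * g k 1 0))
  | base6 (k : Fin m) : Rel q m (g k 1 0 * g k 0 0)
      (g k 0 0 * g k 1 0 + (q⁻¹ ^ 2 - 1) • (g k 1 1 * g k 1 0))
  | cross1 {k l : Fin m} (h : k < l) : Rel q m (g l 0 0 * g k 0 0)
      (g k 0 0 * g l 0 0 + (q⁻¹ ^ 4 - q⁻¹ ^ 2) • (g k 1 0 * g l 0 1))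
  | cross2 {k l : Fin m} (h : k < l) : Rel q m (g l 0 1 * g k 0 0) (g k 0 0 * g l 0 1)
  | cross3 {k l : Fin m} (h : k < l) : Rel q m (g l 0 0 * g k 0 1)
      (g k 0 1 * g l 0 0 + (1 - q⁻¹ ^ 2) • (g k 0 0 * g l 0 1)
        + (q⁻¹ ^ 2 - 1) • (g k 1 1 * g l 0 1))
  | cross4 {k l : Fin m} (h : k < l) : Rel q m (g l 0 1 * g k 0 1) (q ^ 2 • (g k 0 1 * g l 0 1))
  | cross5 {k l : Fin m} (h : k < l) : Rel q m (g l 1 0 * g k 0 0)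
      (g k 0 0 * g l 1 0 + (q⁻¹ ^ 2 - 1) • (g k 1 0 * g l 1 1)
        + (1 - q⁻¹ ^ 2) • (g k 1 0 * g l 0 0))
  | cross6 {k l : Fin m} (h : k < l) : Rel q m (g l 1 1 * g k 0 0)
      (g k 0 0 * g l 1 1 + (1 - q⁻¹ ^ 2) • (g k 1 0 * g l 0 1))
  | cross7 {k l : Fin m} (h : k < l) : Rel q m (g l 1 0 * g k 0 1)
      (q⁻¹ ^ 2 • (g k 0 1 * g l 1 0) + (q⁻¹ ^ 2 - 1) • (g k 0 0 * g l 0 0)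
        + (1 - q⁻¹ ^ 2) • (g k 0 0 * g l 1 1) + (1 - q⁻¹ ^ 2) • (g k 1 1 * g l 0 0)
        + (q⁻¹ ^ 2 - 1) • (g k 1 1 * g l 1 1)
        + (q⁻¹ ^ 4 - q⁻¹ ^ 2 - 1 + q ^ 2) • (g k 1 0 * g l 0 1))
  | cross8 {k l : Fin m} (h : k < l) : Rel q m (g l 1 1 * g k 0 1)
      (g k 0 1 * g l 1 1 + (1 - q ^ 2) • (g k 0 0 * g l 0 1) + (q ^ 2 - 1) • (g k 1 1 * g l 0 1))
  | cross9 {k l : Fin m} (h : k < l) : Rel q m (g l 0 0 * g k 1 0) (g k 1 0 * g l 0 0)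
  | cross10 {k l : Fin m} (h : k < l) : Rel q m (g l 0 1 * g k 1 0)
      (q⁻¹ ^ 2 • (g k 1 0 * g l 0 1))
  | cross11 {k l : Fin m} (h : k < l) : Rel q m (g l 0 0 * g k 1 1)
      (g k 1 1 * g l 0 0 + (1 - q⁻¹ ^ 2) • (g k 1 0 * g l 0 1))
  | cross12 {k l : Fin m} (h : k < l) : Rel q m (g l 0 1 * g k 1 1) (g k 1 1 * g l 0 1)
  | cross13 {k l : Fin m} (h : k < l) : Rel q m (g l 1 0 * g k 1 0) (q ^ 2 • (g k 1 0 * g l 1 0))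
  | cross14 {k l : Fin m} (h : k < l) : Rel q m (g l 1 1 * g k 1 0) (g k 1 0 * g l 1 1)
  | cross15 {k l : Fin m} (h : k < l) : Rel q m (g l 1 0 * g k 1 1)
      (g k 1 1 * g l 1 0 + (q ^ 2 - 1) • (g k 1 0 * g l 1 1) + (1 - q ^ 2) • (g k 1 0 * g l 0 0))
  | cross16 {k l : Fin m} (h : k < l) : Rel q m (g l 1 1 * g k 1 1)
      (g k 1 1 * g l 1 1 + (1 - q ^ 2) • (g k 1 0 * g l 0 1))

/-- The algebra `A_q(2,m)`. -/
abbrev A (q : ℂ) (m : ℕ) := RingQuot (Rel q m)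

/-- The generator `x(k)_{i+1,j+1}` of `A_q(2,m)`. -/
def X (q : ℂ) {m : ℕ} (k : Fin m) (i j : Fin 2) : A q m :=
  RingQuot.mkAlgHom ℂ (Rel q m) (g k i j)

/-- The matrix `X(k) = (x(k)^i_j)` over `A_q(2,m)`. -/
def XM (q : ℂ) {m : ℕ} (k : Fin m) : Matrix (Fin 2) (Fin 2) (A q m) :=
  Matrix.of fun i j => X q k i j

/-- The quantum trace `Tr_q(M) = q·m11 + q⁻¹·m22` of a 2×2 matrix over a ℂ-algebra. -/
def trq {R : Type*} [Ring R] [Algebra ℂ R] (q : ℂ) (M : Matrix (Fin 2) (Fin 2) R) : R :=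
  q • M 0 0 + q⁻¹ • M 1 1

end QTR

namespace QTR

lemma c1 (q : ℂ) {m : ℕ} {k l : Fin m} (h : k < l) :
    X q l 0 0 * X q k 0 0 = X q k 0 0 * X q l 0 0 + (q⁻¹ ^ 4 - q⁻¹ ^ 2) • (X q k 1 0 * X q l 0 1) := by
  have h' := RingQuot.mkAlgHom_rel ℂ (Rel.cross1 (q := q) h)
  simp only [map_mul, map_add, map_smul] at h'
  exact h'

lemma c2 (q : ℂ) {m : ℕ} {k l : Fin m} (h : k < l) :
    X q l 0 1 * X q k 0 0 = X q k 0 0 * X q l 0 1 := by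
  have h' := RingQuot.mkAlgHom_rel ℂ (Rel.cross2 (q := q) h)
  simp only [map_mul, map_add, map_smul] at h'
  exact h'

lemma c3 (q : ℂ) {m : ℕ} {k l : Fin m} (h : k < l) :
    X q l 0 0 * X q k 0 1 = X q k 0 1 * X q l 0 0 + (1 - q⁻¹ ^ 2) • (X q k 0 0 * X q l 0 1) + (q⁻¹ ^ 2 - 1) • (X q k 1 1 * X q l 0 1) := by
  have h' := RingQuot.mkAlgHom_rel ℂ (Rel.cross3 (q := q) h)
  simp only [map_mul, map_add, map_smul] at h'
  exact h'

lemma c4 (q : ℂ) {m : ℕ} {k l : Fin m} (h : k < l) :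
    X q l 0 1 * X q k 0 1 = q ^ 2 • (X q k 0 1 * X q l 0 1) := by
  have h' := RingQuot.mkAlgHom_rel ℂ (Rel.cross4 (q := q) h)
  simp only [map_mul, map_add, map_smul] at h'
  exact h'

lemma c5 (q : ℂ) {m : ℕ} {k l : Fin m} (h : k < l) :
    X q l 1 0 * X q k 0 0 = X q k 0 0 * X q l 1 0 + (q⁻¹ ^ 2 - 1) • (X q k 1 0 * X q l 1 1) + (1 - q⁻¹ ^ 2) • (X q k 1 0 * X q l 0 0) := by
  have h' := RingQuot.mkAlgHom_rel ℂ (Rel.cross5 (q := q) h)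
  simp only [map_mul, map_add, map_smul] at h'
  exact h'

lemma c6 (q : ℂ) {m : ℕ} {k l : Fin m} (h : k < l) :
    X q l 1 1 * X q k 0 0 = X q k 0 0 * X q l 1 1 + (1 - q⁻¹ ^ 2) • (X q k 1 0 * X q l 0 1) := by
  have h' := RingQuot.mkAlgHom_rel ℂ (Rel.cross6 (q := q) h)
  simp only [map_mul, map_add, map_smul] at h'
  exact h'

lemma c7 (q : ℂ) {m : ℕ} {k l : Fin m} (h : k < l) :
    X q l 1 0 * X q k 0 1 = q⁻¹ ^ 2 • (X q k 0 1 * X q l 1 0) + (q⁻¹ ^ 2 - 1) • (X q k 0 0 * X q l 0 0) + (1 - q⁻¹ ^ 2) • (X q k 0 0 * X q l 1 1) + (1 - q⁻¹ ^ 2) • (X q k 1 1 * X q l 0 0) + (q⁻¹ ^ 2 - 1) • (X q k 1 1 * X q l 1 1) + (q⁻¹ ^ 4 - q⁻¹ ^ 2 - 1 + q ^ 2) • (X q k 1 0 * X q l 0 1) := by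
  have h' := RingQuot.mkAlgHom_rel ℂ (Rel.cross7 (q := q) h)
  simp only [map_mul, map_add, map_smul] at h'
  exact h'

lemma c8 (q : ℂ) {m : ℕ} {k l : Fin m} (h : k < l) :
    X q l 1 1 * X q k 0 1 = X q k 0 1 * X q l 1 1 + (1 - q ^ 2) • (X q k 0 0 * X q l 0 1) + (q ^ 2 - 1) • (X q k 1 1 * X q l 0 1) := by
  have h' := RingQuot.mkAlgHom_rel ℂ (Rel.cross8 (q := q) h)
  simp only [map_mul, map_add, map_smul] at h'
  exact h'

lemma c9 (q : ℂ) {m : ℕ} {k l : Fin m} (h : k < l) :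
    X q l 0 0 * X q k 1 0 = X q k 1 0 * X q l 0 0 := by
  have h' := RingQuot.mkAlgHom_rel ℂ (Rel.cross9 (q := q) h)
  simp only [map_mul, map_add, map_smul] at h'
  exact h'

lemma c10 (q : ℂ) {m : ℕ} {k l : Fin m} (h : k < l) :
    X q l 0 1 * X q k 1 0 = q⁻¹ ^ 2 • (X q k 1 0 * X q l 0 1) := by
  have h' := RingQuot.mkAlgHom_rel ℂ (Rel.cross10 (q := q) h)
  simp only [map_mul, map_add, map_smul] at h'
  exact h'

lemma c11 (q : ℂ) {m : ℕ} {k l : Fin m} (h : k < l) :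
    X q l 0 0 * X q k 1 1 = X q k 1 1 * X q l 0 0 + (1 - q⁻¹ ^ 2) • (X q k 1 0 * X q l 0 1) := by
  have h' := RingQuot.mkAlgHom_rel ℂ (Rel.cross11 (q := q) h)
  simp only [map_mul, map_add, map_smul] at h'
  exact h'

lemma c12 (q : ℂ) {m : ℕ} {k l : Fin m} (h : k < l) :
    X q l 0 1 * X q k 1 1 = X q k 1 1 * X q l 0 1 := by
  have h' := RingQuot.mkAlgHom_rel ℂ (Rel.cross12 (q := q) h)
  simp only [map_mul, map_add, map_smul] at h'
  exact h'

lemma c13 (q : ℂ) {m : ℕ} {k l : Fin m} (h : k < l) :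
    X q l 1 0 * X q k 1 0 = q ^ 2 • (X q k 1 0 * X q l 1 0) := by
  have h' := RingQuot.mkAlgHom_rel ℂ (Rel.cross13 (q := q) h)
  simp only [map_mul, map_add, map_smul] at h'
  exact h'

lemma c14 (q : ℂ) {m : ℕ} {k l : Fin m} (h : k < l) :
    X q l 1 1 * X q k 1 0 = X q k 1 0 * X q l 1 1 := by
  have h' := RingQuot.mkAlgHom_rel ℂ (Rel.cross14 (q := q) h)
  simp only [map_mul, map_add, map_smul] at h'
  exact h'

lemma c15 (q : ℂ) {m : ℕ} {k l : Fin m} (h : k < l) :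
    X q l 1 0 * X q k 1 1 = X q k 1 1 * X q l 1 0 + (q ^ 2 - 1) • (X q k 1 0 * X q l 1 1) + (1 - q ^ 2) • (X q k 1 0 * X q l 0 0) := by
  have h' := RingQuot.mkAlgHom_rel ℂ (Rel.cross15 (q := q) h)
  simp only [map_mul, map_add, map_smul] at h'
  exact h'

lemma c16 (q : ℂ) {m : ℕ} {k l : Fin m} (h : k < l) :
    X q l 1 1 * X q k 1 1 = X q k 1 1 * X q l 1 1 + (1 - q ^ 2) • (X q k 1 0 * X q l 0 1) := by
  have h' := RingQuot.mkAlgHom_rel ℂ (Rel.cross16 (q := q) h)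
  simp only [map_mul, map_add, map_smul] at h'
  exact h'

end QTR


set_option maxHeartbeats 4000000

/-- in `A_q(2,3)` (with `X = X(1)`, `Y = X(2)`, `Z = X(3)`) one has
`q²·Tr_q(YZX) − q⁻²·Tr_q(XYZ) = (q − q⁻¹)·Tr_q(X)·Tr_q(YZ)`. -/
theorem qtrace_yzx_identity (q : ℂ) (hq : q ≠ 0) :
    (q ^ 2 : ℂ) • QTR.trq q (QTR.XM q (1 : Fin 3) * QTR.XM q 2 * QTR.XM q 0)
      - q⁻¹ ^ 2 • QTR.trq q (QTR.XM q (0 : Fin 3) * QTR.XM q 1 * QTR.XM q 2)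
      = (q - q⁻¹) •
        (QTR.trq q (QTR.XM q (0 : Fin 3)) * QTR.trq q (QTR.XM q (1 : Fin 3) * QTR.XM q 2)) := by
  have h01 : (0 : Fin 3) < 1 := by decide
  have h02 : (0 : Fin 3) < 2 := by decide
  simp only [QTR.trq, QTR.XM, Matrix.mul_apply, Fin.sum_univ_two, Matrix.of_apply,
    add_mul, mul_add, smul_add, smul_smul, mul_smul_comm, smul_mul_assoc, mul_assoc]
  simp only [QTR.c1 q h02, QTR.c2 q h02, QTR.c3 q h02, QTR.c4 q h02, QTR.c5 q h02,
    QTR.c6 q h02, QTR.c7 q h02, QTR.c8 q h02, QTR.c9 q h02, QTR.c10 q h02, QTR.c11 q h02,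
    QTR.c12 q h02, QTR.c13 q h02, QTR.c14 q h02, QTR.c15 q h02, QTR.c16 q h02,
    add_mul, mul_add, smul_add, smul_smul, mul_smul_comm, smul_mul_assoc, mul_assoc]
  simp only [← mul_assoc]
  simp only [QTR.c1 q h01, QTR.c2 q h01, QTR.c3 q h01, QTR.c4 q h01, QTR.c5 q h01,
    QTR.c6 q h01, QTR.c7 q h01, QTR.c8 q h01, QTR.c9 q h01, QTR.c10 q h01, QTR.c11 q h01,
    QTR.c12 q h01, QTR.c13 q h01, QTR.c14 q h01, QTR.c15 q h01, QTR.c16 q h01,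
    add_mul, mul_add, smul_add, smul_smul, mul_smul_comm, smul_mul_assoc]
  have h7 : q ^ 7 * q⁻¹ ^ 7 = 1 := by field_simp
  have h8 : q ^ 8 * q⁻¹ ^ 8 = 1 := by field_simp
  match_scalars
  all_goals try field_simp
  all_goals try ring1
  all_goals try linear_combination (q ^ 2 - 1) * h7
  all_goals try linear_combination (q ^ 7 - q ^ 9 - q ^ 11 + q ^ 13) * h8
  all_goals linear_combination (q ^ 5 - q ^ 7 - q ^ 9 + q ^ 11) * h8
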